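/- Let q be a prime power and n a positive integer with n | q²−1 and n > q+1. Let δ ∈ F_{q²}* \ F_q be an element of order n, and let C ⊆ F_q[x]/(x^n − 1) be the cyclic code with generator polynomial g(x) = (x−δ^{−q})(x−δ^{−1})(x−1)(x−δ)(x−δ^q). Then C is an [n, n−5, d]_q code with 4 ≤ d ≤ 6, and if 5 ≤ d ≤ 6 then C is an (n,7)_q MDS symbol-pair code. -/

import Mathlib

open Polynomial

/-- The pair-distance between two vectors indexed by `ZMod n`,
with indices taken modulo `n`. -/
def pairDist {n : ℕ} [NeZero n] {α : Type*} [DecidableEq α] (u v : ZMod n → α) : ℕ :=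
  (Finset.univ.filter fun i : ZMod n => (u i, u (i + 1)) ≠ (v i, v (i + 1))).card

/-- A finite subset of `ZMod n` consisting of (at least one) cyclically consecutive elements. -/
def IsArc {n : ℕ} (T : Finset (ZMod n)) : Prop :=
  ∃ (a : ZMod n) (k : ℕ), 0 < k ∧ T = (Finset.range k).image fun j : ℕ => a + (j : ZMod n)

/-- `L(S)`: the minimal number of parts in a partition of `S` into nonempty sets of
cyclically consecutive elements of `ZMod n`. -/
noncomputable def cycL {n : ℕ} (S : Finset (ZMod n)) : ℕ :=
  sInf {m | ∃ P : Finset (Finset (ZMod n)), P.card = m ∧ (∀ T ∈ P, IsArc T) ∧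
    (↑P : Set (Finset (ZMod n))).PairwiseDisjoint id ∧ P.sup id = S}

/-- The polynomial `∑ i, c i * x^i` associated to a vector `c` of length `n`. -/
noncomputable def polyOf {n : ℕ} [NeZero n] {F : Type*} [Semiring F] (c : ZMod n → F) :
    Polynomial F :=
  ∑ i : ZMod n, Polynomial.C (c i) * Polynomial.X ^ i.val

/-- `d` is the minimum pair-distance of the code `Code`. -/
def IsMinPairDist {n : ℕ} [NeZero n] {α : Type*} [DecidableEq α]
    (Code : Set (ZMod n → α)) (d : ℕ) : Prop :=
  (∀ u ∈ Code, ∀ v ∈ Code, u ≠ v → d ≤ pairDist u v) ∧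
    ∃ u ∈ Code, ∃ v ∈ Code, u ≠ v ∧ pairDist u v = d

/-- The coefficient `a₀(i) = ∑_{j=0}^{⌊(i−2)/2⌋} C(i−2−j, j) b^{i−2−2j} c^{j+1}`. -/
noncomputable def aCoeff0 {F : Type*} [Field F] (b c : F) (i : ℕ) : F :=
  ∑ j ∈ Finset.range ((i - 2) / 2 + 1),
    ((i - 2 - j).choose j : F) * b ^ (i - 2 - 2 * j) * c ^ (j + 1)

/-- The coefficient `a₁(i) = ∑_{j=0}^{⌊(i−1)/2⌋} C(i−1−j, j) b^{i−1−2j} c^{j}`. -/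
noncomputable def aCoeff1 {F : Type*} [Field F] (b c : F) (i : ℕ) : F :=
  ∑ j ∈ Finset.range ((i - 1) / 2 + 1),
    ((i - 1 - j).choose j : F) * b ^ (i - 1 - 2 * j) * c ^ j

/-!
The Frobenius `x ↦ x ^ q` permutes the roots of the generator `g` (as `δ ^ q² = δ`), so `g` has
coefficients in `F_q` and the code has `q ^ (n - 5)` elements. Since `δ⁻¹, 1, δ` are three
consecutive powers of `δ`, a Vandermonde argument kills every nonzero codeword of weight `≤ 3`;
and by counting, two distinct codewords agree outside the positions `0, …, 5`, so `d ≤ 6`.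

The pair weight of a word is its Hamming weight plus the number of its cyclic runs of nonzero
entries. Hence a codeword of weight `5` or `6` has pair weight `≥ 7` unless it has weight `5` and
a single run, i.e. is supported on five consecutive positions. After a cyclic shift it is then a
polynomial of degree `< 5` vanishing at the five distinct roots of `g`, so it is zero. The two
codewords above that agree outside `0, …, 5` differ in at most seven pairs.
-/

open Finset

section PolyOf

variable {n : ℕ} [NeZero n]

lemma coeff_polyOf {R : Type*} [Semiring R] (c : ZMod n → R) (k : ℕ) :
    (polyOf c).coeff k = if k < n then c k else 0 := by
  classical
  simp only [polyOf, finsetSum_coeff, coeff_C_mul, coeff_X_pow, mul_ite, mul_one, mul_zero]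
  split_ifs with hk
  · rw [Finset.sum_eq_single (k : ZMod n) (fun i _ hi => if_neg fun h => hi (by simp [h]))
      (by simp), if_pos (ZMod.val_cast_of_lt hk).symm]
  · exact Finset.sum_eq_zero fun i _ => if_neg fun h : k = i.val => hk (h ▸ ZMod.val_lt i)

lemma coeff_polyOf_val {R : Type*} [Semiring R] (c : ZMod n → R) (i : ZMod n) :
    (polyOf c).coeff i.val = c i := by
  simp [coeff_polyOf, ZMod.val_lt]

lemma polyOf_coeff_val {R : Type*} [Semiring R] {p : R[X]} (hp : p.natDegree < n) :
    polyOf (fun i : ZMod n => p.coeff i.val) = p := by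
  ext k
  rw [coeff_polyOf]
  split_ifs with hk
  · rw [ZMod.val_cast_of_lt hk]
  · exact (coeff_eq_zero_of_natDegree_lt (by omega)).symm

lemma natDegree_polyOf_lt {R : Type*} [Semiring R] (c : ZMod n → R) :
    (polyOf c).natDegree < n := by
  have hn := Nat.pos_of_ne_zero (NeZero.ne n)
  have : (polyOf c).natDegree ≤ n - 1 :=
    natDegree_le_iff_coeff_eq_zero.mpr fun k hk => by
      rw [coeff_polyOf, if_neg (by omega)]
  omega

lemma polyOf_sub {R : Type*} [Ring R] (c c' : ZMod n → R) :
    polyOf (c - c') = polyOf c - polyOf c' := by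
  simp only [polyOf, ← Finset.sum_sub_distrib, Pi.sub_apply, C_sub, sub_mul]

lemma polyOf_map {R S : Type*} [Semiring R] [Semiring S] (f : R →+* S) (c : ZMod n → R) :
    (polyOf c).map f = polyOf fun i => f (c i) := by
  simp [polyOf, Polynomial.map_sum]

lemma eval_polyOf {R : Type*} [CommSemiring R] (c : ZMod n → R) (r : R) :
    (polyOf c).eval r = ∑ i, c i * r ^ i.val := by
  simp [polyOf, eval_finsetSum]

end PolyOf

section RootsOfUnity

variable {n : ℕ} {M : Type*} [Monoid M] {r : M}

lemma pow_val_add [NeZero n] (hr : r ^ n = 1) (a b : ZMod n) :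
    r ^ (a + b).val = r ^ a.val * r ^ b.val := by
  rw [ZMod.val_add, ← pow_eq_pow_mod _ hr, pow_add]

lemma pow_val_natCast (hr : r ^ n = 1) (j : ℕ) : r ^ (j : ZMod n).val = r ^ j := by
  rw [ZMod.val_natCast, ← pow_eq_pow_mod _ hr]

lemma pow_val_injective [NeZero n] (hr : orderOf r = n) :
    Function.Injective fun i : ZMod n => r ^ i.val :=
  fun i j h => ZMod.val_injective n <|
    pow_injOn_Iio_orderOf (hr ▸ ZMod.val_lt i) (hr ▸ ZMod.val_lt j) h

lemma ne_zero_of_orderOf_eq [NeZero n] {M₀ : Type*} [MonoidWithZero M₀] [Nontrivial M₀]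
    {δ : M₀} (hδ : orderOf δ = n) : δ ≠ 0 := by
  rintro rfl
  exact NeZero.ne n (hδ ▸ orderOf_zero M₀)

lemma natCast_injOn_Iio : Set.InjOn (Nat.cast : ℕ → ZMod n) (Set.Iio n) :=
  fun j hj j' hj' h => by
    simpa [ZMod.val_natCast, Nat.mod_eq_of_lt hj, Nat.mod_eq_of_lt hj'] using congrArg ZMod.val h

end RootsOfUnity

def SupportedInArc {n : ℕ} {α : Type*} [Zero α] (c : ZMod n → α) (a : ZMod n) (m : ℕ) :
    Prop :=
  ∀ i, c i ≠ 0 → ∃ j < m, i = a + (j : ZMod n)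

section Vandermonde

variable {n : ℕ} [NeZero n] {K : Type*} [Field K]

lemma eq_zero_of_supportedInArc_of_eval_eq_zero {m : ℕ} (hm : m ≤ n) {c : ZMod n → K}
    {a : ZMod n} (harc : SupportedInArc c a m) {r : Fin m → K} (hr : Function.Injective r)
    (hrn : ∀ k, r k ^ n = 1) (hroot : ∀ k, (polyOf c).eval (r k) = 0) : c = 0 := by
  have hv : (fun j : Fin m => c (a + j)) = 0 := by
    refine Matrix.eq_zero_of_forall_index_sum_mul_pow_eq_zero hr fun k => ?_
    have hra : r k ^ a.val ≠ 0 :=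
      pow_ne_zero _ (IsUnit.of_pow_eq_one (hrn k) (NeZero.ne n)).ne_zero
    refine (mul_right_injective₀ hra) ?_
    calc r k ^ a.val * ∑ j : Fin m, c (a + j) * r k ^ (j : ℕ)
        = ∑ i, c i * r k ^ i.val := by
          rw [Finset.mul_sum]
          refine Fintype.sum_of_injective (fun j : Fin m => a + (j : ZMod n))
            (fun j j' h => Fin.ext <| natCast_injOn_Iio (j.2.trans_le hm) (j'.2.trans_le hm)
              (add_left_cancel h)) _ _ (fun i hi => ?_) fun j => ?_
          · by_contra hci
            obtain ⟨j, hj, rfl⟩ := harc i (left_ne_zero_of_mul hci)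
            exact hi ⟨⟨j, hj⟩, rfl⟩
          · simp only [pow_val_add (hrn k), pow_val_natCast (hrn k)]
            ring
      _ = r k ^ a.val * 0 := by rw [← eval_polyOf, hroot, mul_zero]
  funext i
  by_contra hi
  obtain ⟨j, hj, rfl⟩ := harc i hi
  exact hi (congrFun hv ⟨j, hj⟩)

lemma eq_zero_of_hammingNorm_le_of_eval_eq_zero [DecidableEq K] {δ β : K}
    (hδ : orderOf δ = n) (hβ : β ≠ 0) {c : ZMod n → K} {m : ℕ} (hc : hammingNorm c ≤ m)
    (hroot : ∀ e < m, (polyOf c).eval (β * δ ^ e) = 0) : c = 0 := by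
  set s : Finset (ZMod n) := {i | c i ≠ 0}
  let σ : Fin #s ↪ ZMod n := s.equivFin.symm.toEmbedding.trans (Function.Embedding.subtype _)
  have hσ : ∀ i, c i ≠ 0 → ∃ k, σ k = i := fun i hi =>
    ⟨s.equivFin ⟨i, by simpa [s] using hi⟩, by simp [σ]⟩
  have hv : (fun k => c (σ k) * β ^ (σ k).val) = 0 := by
    refine Matrix.eq_zero_of_forall_pow_sum_mul_pow_eq_zero (f := fun k => δ ^ (σ k).val)
      ((pow_val_injective hδ).comp σ.injective) fun e => ?_
    rw [← hroot e (e.2.trans_le hc), eval_polyOf]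
    refine Fintype.sum_of_injective σ σ.injective _ _ (fun i hi => ?_) fun k => ?_
    · by_contra hci
      exact hi (hσ i (left_ne_zero_of_mul hci))
    · rw [mul_pow, ← pow_mul, ← pow_mul, mul_comm _ (e : ℕ), mul_assoc]
  funext i
  by_contra hi
  obtain ⟨k, rfl⟩ := hσ i hi
  exact hi ((mul_eq_zero.mp (congrFun hv k)).resolve_right (pow_ne_zero _ hβ))

end Vandermonde

section PairWeight

variable {n : ℕ} [NeZero n] {α : Type*} [DecidableEq α]

def pairWeight [Zero α] (c : ZMod n → α) : ℕ := #{i | c i ≠ 0 ∨ c (i + 1) ≠ 0}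

/-- Indexed by the position just before the run: a run of nonzero entries starts at `i + 1`. -/
def runStarts [Zero α] (c : ZMod n → α) : Finset (ZMod n) := {i | c i = 0 ∧ c (i + 1) ≠ 0}

lemma pairDist_eq_pairWeight_sub [AddGroup α] (u v : ZMod n → α) :
    pairDist u v = pairWeight (u - v) := by
  simp only [pairDist, pairWeight, Pi.sub_apply, ne_eq, sub_eq_zero, Prod.mk.injEq, not_and_or]

variable [Zero α]

lemma pairWeight_eq_hammingNorm_add_card_runStarts (c : ZMod n → α) :
    pairWeight c = hammingNorm c + #(runStarts c) := by
  rw [pairWeight, hammingNorm, runStarts, ← card_union_of_disjoint]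
  · congr 1
    ext i
    simp only [mem_filter, mem_univ, true_and, mem_union]
    tauto
  · exact disjoint_filter.mpr fun i _ h h' => h h'.1

lemma runStarts_nonempty {c : ZMod n → α} (hc : c ≠ 0) {t : ZMod n} (ht : c t = 0) :
    (runStarts c).Nonempty := by
  by_contra hrs
  have hstep : ∀ i, c i = 0 → c (i + 1) = 0 := fun i hi => by
    by_contra h
    exact hrs ⟨i, by simp [runStarts, hi, h]⟩
  have hzero : ∀ k : ℕ, c (t + k) = 0 := fun k => by
    induction k with
    | zero => simpa using ht
    | succ k ih => simpa [add_assoc] using hstep _ ih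
  exact hc <| funext fun i => by simpa using hzero (i - t).val

lemma supportedInArc_of_forall_runStarts {c : ZMod n → α} {a : ZMod n}
    (ha : ∀ i ∈ runStarts c, i + 1 = a) : SupportedInArc c a (hammingNorm c) := by
  intro i hi
  set k := (i - a).val
  have hik : i = a + k := by simp [k]
  have hk : k < n := ZMod.val_lt _
  have hrun : ∀ j ≤ k, c (a + j) ≠ 0 := by
    intro j hj
    induction hj using Nat.decreasingInduction with
    | self => rwa [← hik]
    | of_succ j hjk ih =>
      intro h0
      have h := ha (a + j) <| by
        simp only [runStarts, mem_filter, mem_univ, true_and]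
        exact ⟨h0, by rwa [Nat.cast_succ, ← add_assoc] at ih⟩
      rw [add_assoc, add_eq_left, ← Nat.cast_succ, ZMod.natCast_eq_zero_iff] at h
      exact absurd (Nat.le_of_dvd j.succ_pos h) (by omega)
  refine ⟨k, ?_, hik⟩
  calc k < #(range (k + 1)) := by simp
    _ ≤ hammingNorm c := card_le_card_of_injOn (fun j => a + (j : ZMod n))
        (fun j hj => by simpa using hrun j (by simpa [Nat.lt_succ_iff] using hj))
        fun j hj j' hj' h => natCast_injOn_Iio (n := n) (Set.mem_Iio.mpr (by simp at hj; omega))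
          (Set.mem_Iio.mpr (by simp at hj'; omega))
          (add_left_cancel h)

lemma hammingNorm_add_two_le_pairWeight {c : ZMod n → α}
    (hc : ∀ a, ¬ SupportedInArc c a (hammingNorm c)) : hammingNorm c + 2 ≤ pairWeight c := by
  rw [pairWeight_eq_hammingNorm_add_card_runStarts]
  by_contra! h
  have hle : #(runStarts c) ≤ 1 := by omega
  obtain ⟨a, ha⟩ : ∃ a, ∀ i ∈ runStarts c, i + 1 = a := by
    rcases (runStarts c).eq_empty_or_nonempty with h0 | ⟨b, hb⟩
    · exact ⟨0, by simp [h0]⟩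
    · exact ⟨b + 1, fun i hi => by rw [card_le_one.mp hle i hi b hb]⟩
  exact hc a (supportedInArc_of_forall_runStarts ha)

lemma seven_le_pairWeight {c : ZMod n → α} (hn : 6 < n) (h5 : 5 ≤ hammingNorm c)
    (harc : ∀ a, ¬ SupportedInArc c a 5) : 7 ≤ pairWeight c := by
  rw [pairWeight_eq_hammingNorm_add_card_runStarts]
  rcases (show hammingNorm c = 5 ∨ hammingNorm c = 6 ∨ 7 ≤ hammingNorm c by omega)
    with h | h | h
  · have := hammingNorm_add_two_le_pairWeight (c := c) (h ▸ harc)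
    rw [pairWeight_eq_hammingNorm_add_card_runStarts] at this
    omega
  · have hc : c ≠ 0 := fun hc => by simp [hc] at h
    obtain ⟨t, ht⟩ : ∃ t, c t = 0 := by
      by_contra! hne
      have : hammingNorm c = n := by simp [hammingNorm, hne]
      omega
    have := (runStarts_nonempty hc ht).card_pos
    omega
  · omega

lemma SupportedInArc.hammingNorm_le {c : ZMod n → α} {a : ZMod n} {m : ℕ}
    (h : SupportedInArc c a m) : hammingNorm c ≤ m := by
  calc hammingNorm c ≤ #((range m).image fun j : ℕ => a + (j : ZMod n)) :=
        card_le_card fun i hi => by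
          obtain ⟨j, hj, rfl⟩ := h i (by simpa using hi)
          simpa using ⟨j, hj, rfl⟩
    _ ≤ m := card_image_le.trans (by simp)

lemma SupportedInArc.pairWeight_le {c : ZMod n → α} {a : ZMod n} {m : ℕ}
    (h : SupportedInArc c a m) : pairWeight c ≤ m + 1 := by
  calc pairWeight c ≤ #((range (m + 1)).image fun j : ℕ => a - 1 + (j : ZMod n)) :=
        card_le_card fun i hi => by
          simp only [mem_filter, mem_univ, true_and] at hi
          simp only [mem_image, mem_range]
          rcases hi with hi | hi
          · obtain ⟨j, hj, rfl⟩ := h i hi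
            exact ⟨j + 1, by omega, by push_cast; ring⟩
          · obtain ⟨j, hj, hij⟩ := h (i + 1) hi
            exact ⟨j, by omega, by rw [← sub_eq_of_eq_add hij]; ring⟩
    _ ≤ m + 1 := card_image_le.trans (by simp)

end PairWeight

lemma exists_ne_supportedInArc_sub {n : ℕ} [NeZero n] {F : Type*} [AddGroup F] [Fintype F]
    (C : Set (ZMod n → F)) (m : ℕ) (hC : Fintype.card F ^ (n - m) < Nat.card C) :
    ∃ u ∈ C, ∃ v ∈ C, u ≠ v ∧ SupportedInArc (u - v) 0 m := by
  let tail : C → Fin (n - m) → F := fun u j => u.1 ((m + j : ℕ) : ZMod n)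
  obtain ⟨u, v, huv, hne⟩ : ∃ u v, tail u = tail v ∧ u ≠ v := by
    by_contra! h
    have := Nat.card_le_card_of_injective tail fun u v huv => h u v huv
    simp only [Nat.card_fun, Nat.card_eq_fintype_card (α := F), Nat.card_fin] at this
    omega
  refine ⟨u, u.2, v, v.2, fun h => hne (Subtype.ext h), fun i hi => ?_⟩
  by_cases him : i.val < m
  · exact ⟨i.val, him, by simp⟩
  · refine absurd ?_ hi
    have := congrFun huv ⟨i.val - m, by have := ZMod.val_lt i; omega⟩
    simp only [tail, Nat.add_sub_cancel' (not_lt.mp him), ZMod.natCast_val, ZMod.cast_id',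
      id] at this
    simp [this]

section FiniteField

variable {F E : Type*} [Field F] [Fintype F] [Field E] [Algebra F E]

lemma mem_range_algebraMap_of_pow_card_eq_self {x : E} (hx : x ^ Fintype.card F = x) :
    x ∈ Set.range (algebraMap F E) := by
  have hq := Fintype.one_lt_card (α := F)
  have hroots : ((X ^ Fintype.card F - X : F[X]).map (algebraMap F E)).roots =
      (Finset.univ.val : Multiset F).map (algebraMap F E) := by
    rw [← FiniteField.roots_X_pow_card_sub_X,
      roots_map_of_injective_of_card_eq_natDegree (algebraMap F E).injective]
    rw [FiniteField.roots_X_pow_card_sub_X, FiniteField.X_pow_card_sub_X_natDegree_eq F hq]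
    simp
  have hx' : x ∈ ((X ^ Fintype.card F - X : F[X]).map (algebraMap F E)).roots := by
    rw [mem_roots (map_ne_zero (FiniteField.X_pow_card_sub_X_ne_zero F hq))]
    simp [hx]
  rw [hroots] at hx'
  obtain ⟨y, -, hy⟩ := Multiset.mem_map.mp hx'
  exact ⟨y, hy⟩

lemma exists_monic_map_eq_of_map_frobenius_eq {g : E[X]} (hg : g.Monic)
    (hfix : g.map (FiniteField.frobeniusAlgHom F E).toRingHom = g) :
    ∃ w : F[X], w.Monic ∧ w.natDegree = g.natDegree ∧ w.map (algebraMap F E) = g := by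
  have hlifts : g ∈ lifts (algebraMap F E) := by
    refine lifts_iff_coeff_lifts _ |>.mpr fun k => mem_range_algebraMap_of_pow_card_eq_self ?_
    simpa using congrArg (coeff · k) hfix
  obtain ⟨w, hmap, hdeg, hw⟩ := lifts_and_degree_eq_and_monic hlifts hg
  exact ⟨w, hw, natDegree_eq_of_degree_eq hdeg, hmap⟩

lemma card_setOf_dvd_polyOf {n : ℕ} [NeZero n] {w : F[X]} (hw : w.Monic) :
    Nat.card {c : ZMod n → F | w ∣ polyOf c} = Fintype.card F ^ (n - w.natDegree) := by
  have hdeg : ∀ u ∈ degreeLT F (n - w.natDegree), (w * u).natDegree < n := by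
    intro u hu
    rcases eq_or_ne u 0 with rfl | hu0
    · simpa using Nat.pos_of_ne_zero (NeZero.ne n)
    rw [natDegree_mul hw.ne_zero hu0]
    have := (natDegree_lt_iff_degree_lt hu0).mpr (mem_degreeLT.mp hu)
    omega
  let f : degreeLT F (n - w.natDegree) → {c : ZMod n → F | w ∣ polyOf c} := fun u =>
    ⟨fun i => (w * u.1).coeff i.val, by
      show w ∣ polyOf _
      rw [polyOf_coeff_val (hdeg u.1 u.2)]
      exact dvd_mul_right _ _⟩
  have hf : Function.Bijective f := by
    refine ⟨fun u u' h => Subtype.ext <| mul_left_cancel₀ hw.ne_zero ?_, fun c => ?_⟩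
    · rw [← polyOf_coeff_val (hdeg u.1 u.2), ← polyOf_coeff_val (hdeg u'.1 u'.2)]
      exact congrArg polyOf (congrArg Subtype.val h :)
    · obtain ⟨u, hu⟩ := c.2
      refine ⟨⟨u, mem_degreeLT.mpr ?_⟩, Subtype.ext <| funext fun i => ?_⟩
      · rcases eq_or_ne u 0 with rfl | hu0
        · simp
        have := hu ▸ natDegree_polyOf_lt c.1
        rw [natDegree_mul hw.ne_zero hu0] at this
        exact (natDegree_lt_iff_degree_lt hu0).mp (by omega)
      · show (w * u).coeff i.val = c.1 i
        rw [← hu, coeff_polyOf_val]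
  rw [← Nat.card_eq_of_bijective f hf, Nat.card_congr (degreeLTEquiv F _).toEquiv]
  simp only [Nat.card_fun, Nat.card_eq_fintype_card (α := F), Nat.card_fin]

end FiniteField

lemma seven_le_of_dvd_sq_sub_one {q n : ℕ} (hq : 2 ≤ q) (hdvd : n ∣ q ^ 2 - 1)
    (hn : q + 1 < n) : 7 ≤ n := by
  by_contra! h
  have : q ≤ 4 := by omega
  interval_cases q <;> interval_cases n <;> norm_num at hdvd

lemma not_dvd_of_dvd_sq_sub_one {q n : ℕ} (hq : 2 ≤ q) (hdvd : n ∣ q ^ 2 - 1) :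
    ¬ q ∣ n := by
  intro h
  have h1 : q ∣ q ^ 2 - (q ^ 2 - 1) := Nat.dvd_sub (Dvd.intro_left _ (sq q).symm) (h.trans hdvd)
  rw [Nat.sub_sub_self (Nat.one_le_pow _ _ (by omega))] at h1
  exact absurd (Nat.le_of_dvd one_pos h1) (by omega)

section Generator

variable {E : Type*} [Field E]

noncomputable def genPoly (q : ℕ) (δ : E) : E[X] :=
  (X - C (δ⁻¹ ^ q)) * (X - C δ⁻¹) * (X - 1) * (X - C δ) * (X - C (δ ^ q))

lemma genPoly_monic (q : ℕ) (δ : E) : (genPoly q δ).Monic := by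
  unfold genPoly
  refine ((((monic_X_sub_C _).mul (monic_X_sub_C _)).mul ?_).mul (monic_X_sub_C _)).mul
    (monic_X_sub_C _)
  simpa using monic_X_sub_C (1 : E)

lemma natDegree_genPoly (q : ℕ) (δ : E) : (genPoly q δ).natDegree = 5 := by
  unfold genPoly
  compute_degree!

lemma map_genPoly_of_pow_sq_eq_self {q : ℕ} {δ : E} (hδ : δ ^ q ^ 2 = δ) (φ : E →+* E)
    (hφ : ∀ x, φ x = x ^ q) : (genPoly q δ).map φ = genPoly q δ := by
  have hδq : (δ ^ q) ^ q = δ := by rw [← pow_mul, ← sq, hδ]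
  have hδq' : (δ⁻¹ ^ q) ^ q = δ⁻¹ := by rw [inv_pow, inv_pow, hδq]
  simp only [genPoly, Polynomial.map_mul, Polynomial.map_sub, map_X, map_C, Polynomial.map_one,
    hφ, hδq, hδq']
  ring

end Generator

section Code

variable {n : ℕ} [NeZero n] {F E : Type*} [Field F] [Field E] [Algebra F E] {q : ℕ} {δ : E}

lemma eq_zero_of_genPoly_dvd_of_hammingNorm_le_three [DecidableEq F] (hδ : orderOf δ = n)
    {c : ZMod n → F} (hc : genPoly q δ ∣ (polyOf c).map (algebraMap F E))
    (hw : hammingNorm c ≤ 3) : c = 0 := by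
  classical
  have hδ0 : δ ≠ 0 := ne_zero_of_orderOf_eq hδ
  rw [polyOf_map] at hc
  have h := eq_zero_of_hammingNorm_le_of_eval_eq_zero hδ (inv_ne_zero hδ0)
    ((hammingNorm_comp_le_hammingNorm (fun _ => algebraMap F E) fun _ => map_zero _).trans hw)
    fun e he => eval_eq_zero_of_dvd_of_eval_eq_zero hc ?_
  · funext i
    simpa using congrFun h i
  · have h2 : δ⁻¹ * δ ^ 2 = δ := by field_simp
    interval_cases e <;> simp [genPoly, hδ0, h2]

lemma eq_zero_of_genPoly_dvd_of_supportedInArc (hq : 2 ≤ q) (hqn : q + 1 < n)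
    (hnq : n ≠ 2 * q) (hδ : orderOf δ = n) {c : ZMod n → F}
    (hc : genPoly q δ ∣ (polyOf c).map (algebraMap F E)) {a : ZMod n}
    (harc : SupportedInArc c a 5) : c = 0 := by
  have hδn : δ ^ n = 1 := hδ ▸ pow_orderOf_eq_one δ
  have hinv : δ ^ (n - 1) = δ⁻¹ :=
    eq_inv_of_mul_eq_one_left (by rw [← pow_succ, Nat.sub_add_cancel (by omega), hδn])
  have hinvq : δ ^ (n - q) = δ⁻¹ ^ q := by
    rw [inv_pow]
    exact eq_inv_of_mul_eq_one_left (by rw [← pow_add, Nat.sub_add_cancel (by omega), hδn])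
  let e : Fin 5 → ℕ := ![n - q, n - 1, 0, 1, q]
  have he : ∀ k, e k < n := by
    intro k
    fin_cases k <;> simp [e] <;> omega
  rw [polyOf_map] at hc
  have h := eq_zero_of_supportedInArc_of_eval_eq_zero (by omega : 5 ≤ n)
    (c := fun i => algebraMap F E (c i)) (fun i hi => harc i (by simpa using hi))
    (r := fun k => δ ^ e k) ?_ (fun k => by rw [← pow_mul, mul_comm, pow_mul, hδn, one_pow])
    fun k => eval_eq_zero_of_dvd_of_eval_eq_zero hc ?_
  · funext i
    simpa using congrFun h i
  · intro k k' hkk'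
    have := pow_injOn_Iio_orderOf (by rw [Set.mem_Iio, hδ]; exact he k)
      (by rw [Set.mem_Iio, hδ]; exact he k') hkk'
    fin_cases k <;> fin_cases k' <;> simp [e] at this ⊢ <;> omega
  · fin_cases k <;> simp [e, genPoly, hinv, hinvq]

lemma card_setOf_genPoly_dvd [Fintype F] (hδ : δ ^ Fintype.card F ^ 2 = δ) :
    Nat.card {c : ZMod n → F | genPoly (Fintype.card F) δ ∣ (polyOf c).map (algebraMap F E)} =
      Fintype.card F ^ (n - 5) := by
  obtain ⟨w, hw, hwdeg, hwmap⟩ := exists_monic_map_eq_of_map_frobenius_eq (F := F)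
    (genPoly_monic _ δ) (map_genPoly_of_pow_sq_eq_self hδ _ fun x => by simp)
  simp_rw [← hwmap, map_dvd_map' (algebraMap F E)]
  rw [card_setOf_dvd_polyOf hw, hwdeg, natDegree_genPoly]

lemma dvd_map_polyOf_sub {g : E[X]} {u v : ZMod n → F}
    (hu : g ∣ (polyOf u).map (algebraMap F E)) (hv : g ∣ (polyOf v).map (algebraMap F E)) :
    g ∣ (polyOf (u - v)).map (algebraMap F E) := by
  rw [polyOf_sub, Polynomial.map_sub]
  exact dvd_sub hu hv

lemma seven_le_pairDist [DecidableEq F] (hq : 2 ≤ q) (hqn : q + 1 < n) (hnq : n ≠ 2 * q)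
    (hn : 7 ≤ n) (hδ : orderOf δ = n) {u v : ZMod n → F}
    (hu : genPoly q δ ∣ (polyOf u).map (algebraMap F E))
    (hv : genPoly q δ ∣ (polyOf v).map (algebraMap F E)) (h5 : 5 ≤ hammingNorm (u - v)) :
    7 ≤ pairDist u v := by
  rw [pairDist_eq_pairWeight_sub]
  refine seven_le_pairWeight (by omega) h5 fun a ha => ?_
  have := eq_zero_of_genPoly_dvd_of_supportedInArc hq hqn hnq hδ (dvd_map_polyOf_sub hu hv) ha
  simp [this] at h5

end Code

theorem stmt12_general {q n d : ℕ} [NeZero n] {F E : Type*} [Field F] [Fintype F] [DecidableEq F]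
    [Field E] [Algebra F E]
    (hq : Fintype.card F = q)
    (hdvd : n ∣ q ^ 2 - 1) (hn : q + 1 < n)
    {δ : E} (hδ : orderOf δ = n)
    (Code : Set (ZMod n → F))
    (hCode : Code = {c : ZMod n → F |
      ((X - C (δ⁻¹ ^ q)) * (X - C δ⁻¹) * (X - 1) * (X - C δ) * (X - C (δ ^ q))) ∣
        (polyOf c).map (algebraMap F E)})
    (hd : (∀ c ∈ Code, c ≠ 0 → d ≤ hammingNorm c) ∧ ∃ c ∈ Code, c ≠ 0 ∧ hammingNorm c = d) :
    Nat.card Code = q ^ (n - 5) ∧ 4 ≤ d ∧ d ≤ 6 ∧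
      (5 ≤ d → IsMinPairDist Code 7 ∧ Nat.card Code = q ^ (n - 7 + 2)) := by
  subst hq
  change Code = {c | genPoly (Fintype.card F) δ ∣ (polyOf c).map (algebraMap F E)} at hCode
  have hq2 : 2 ≤ Fintype.card F := Fintype.one_lt_card
  have hn7 := seven_le_of_dvd_sq_sub_one hq2 hdvd hn
  have hnq : n ≠ 2 * Fintype.card F := fun h =>
    not_dvd_of_dvd_sq_sub_one hq2 hdvd ⟨2, by omega⟩
  have hδq : δ ^ Fintype.card F ^ 2 = δ := by
    rw [← Nat.sub_add_cancel (Nat.one_le_pow 2 _ (by omega)), pow_succ,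
      orderOf_dvd_iff_pow_eq_one.mp (hδ ▸ hdvd), one_mul]
  have hcard : Nat.card Code = Fintype.card F ^ (n - 5) := by
    rw [hCode]
    exact card_setOf_genPoly_dvd hδq
  have hgen : ∀ c ∈ Code, genPoly (Fintype.card F) δ ∣ (polyOf c).map (algebraMap F E) := by
    rw [hCode]
    exact fun _ => id
  have hsub : ∀ u ∈ Code, ∀ v ∈ Code, u - v ∈ Code := by
    rw [hCode]
    exact fun _ hu _ hv => dvd_map_polyOf_sub hu hv
  obtain ⟨u, hu, v, hv, huv, harc⟩ := exists_ne_supportedInArc_sub Code 6 <| by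
    rw [hcard]
    exact Nat.pow_lt_pow_right hq2 (by omega)
  obtain ⟨c₀, hc₀, hc₀0, rfl⟩ := hd.2
  have hpair (h5 : 5 ≤ hammingNorm c₀) (u) (hu : u ∈ Code) (v) (hv : v ∈ Code)
      (huv : u ≠ v) : 7 ≤ pairDist u v :=
    seven_le_pairDist hq2 hn hnq hn7 hδ (hgen u hu) (hgen v hv)
      (h5.trans (hd.1 _ (hsub u hu v hv) (sub_ne_zero.mpr huv)))
  refine ⟨hcard, ?_, (hd.1 _ (hsub u hu v hv) (sub_ne_zero.mpr huv)).trans harc.hammingNorm_le,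
    fun h5 => ⟨⟨hpair h5, u, hu, v, hv, huv, ?_⟩, by rw [hcard]; congr 1; omega⟩⟩
  · by_contra! h
    exact hc₀0 (eq_zero_of_genPoly_dvd_of_hammingNorm_le_three hδ (hgen _ hc₀) (by omega))
  · exact le_antisymm (pairDist_eq_pairWeight_sub u v ▸ harc.pairWeight_le)
      (hpair h5 u hu v hv huv)

/-- for a prime power `q`, `n | q²−1` with `n > q+1`, and
`δ ∈ F_{q²}* \ F_q` of order `n`, the cyclic code with generator polynomial
`g(x) = (x−δ^{−q})(x−δ^{−1})(x−1)(x−δ)(x−δ^q)` is an `[n, n−5, d]_q` code with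
`4 ≤ d ≤ 6`, and if `5 ≤ d ≤ 6` then it is an `(n,7)_q` MDS symbol-pair code. -/
theorem stmt12 {q n d : ℕ} [NeZero n] {F E : Type*} [Field F] [Fintype F] [DecidableEq F]
    [Field E] [Fintype E] [Algebra F E]
    (hq : Fintype.card F = q) (hE : Fintype.card E = q ^ 2)
    (hdvd : n ∣ q ^ 2 - 1) (hn : q + 1 < n)
    {δ : E} (hδ0 : δ ≠ 0) (hδF : δ ∉ Set.range (algebraMap F E)) (hδ : orderOf δ = n)
    (Code : Set (ZMod n → F))
    (hCode : Code = {c : ZMod n → F |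
      ((X - C (δ⁻¹ ^ q)) * (X - C δ⁻¹) * (X - 1) * (X - C δ) * (X - C (δ ^ q))) ∣
        (polyOf c).map (algebraMap F E)})
    (hd : (∀ c ∈ Code, c ≠ 0 → d ≤ hammingNorm c) ∧ ∃ c ∈ Code, c ≠ 0 ∧ hammingNorm c = d) :
    Nat.card Code = q ^ (n - 5) ∧ 4 ≤ d ∧ d ≤ 6 ∧
      (5 ≤ d → IsMinPairDist Code 7 ∧ Nat.card Code = q ^ (n - 7 + 2)) :=
  stmt12_general hq hdvd hn hδ Code hCode hd
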